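/- Let U = ∂_{ρ₁,e₁} and V = ∂_{ρ₂,e₂} with c₂ = ⟨ρ₂,e₁⟩ ≥ 1, d₁ = ⟨ρ₁,e₂⟩ ≥ 0 and δ = d₁ + 1. Then ad_U^δ(V) = −c₂ · δ! · ∂_{ρ₁, e₂ + δ e₁}, and ad_U^m(V) = 0 for all m ≥ δ + 1. -/

import Mathlib

/-- The homogeneous derivation `∂_{ρ,e}` of the (semi)group algebra, defined on the
monomial basis by `∂_{ρ,e}(χ^m) = ⟨ρ,m⟩ χ^{m+e}`. -/
noncomputable def homDer (K : Type*) [Field K] {M : Type*} [AddCommGroup M]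
    (ρ : M →+ ℤ) (e : M) :
    AddMonoidAlgebra K M →ₗ[K] AddMonoidAlgebra K M :=
  (Finsupp.lsum K fun m =>
    LinearMap.toSpanSingleton K (AddMonoidAlgebra K M)
      ((ρ m : ℤ) • AddMonoidAlgebra.single (m + e) (1 : K))) ∘ₗ
    (AddMonoidAlgebra.coeffLinearEquiv K).toLinearMap

/-!
Two homogeneous derivations bracket to a combination of homogeneous derivations,
`[∂_{ρ,e}, ∂_{ρ',e'}] = ρ(e') ∂_{ρ',e+e'} - ρ'(e) ∂_{ρ,e+e'}`. With `U = ∂_{ρ₁,e₁}`,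
`ρ₁(e₁) = -1` and `ρ₁(e₂) = d`, iterating `ad_U` on `V = ∂_{ρ₂,e₂}` therefore gives, for every `k`,
`ad_U^k V = d^{(k)} ∂_{ρ₂, e₂+ke₁} - ρ₂(e₁) k d^{(k-1)} ∂_{ρ₁, e₂+ke₁}` with falling factorials
`d^{(k)}`; these vanish for `k > d`, so only the second term survives at `k = d+1`, and nothing
from `k = d+2` on.
-/

open AddMonoidAlgebra

theorem Nat.cast_descFactorial_succ {R : Type*} [CommRing R] (n k : ℕ) :
    (n.descFactorial (k + 1) : R) = ((n : R) - k) * n.descFactorial k := by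
  rcases le_or_gt k n with hk | hk
  · rw [Nat.descFactorial_succ, Nat.cast_mul, Nat.cast_sub hk]
  · rw [Nat.descFactorial_of_lt hk, Nat.descFactorial_of_lt (by omega)]
    simp

theorem Nat.cast_mul_descFactorial_pred {R : Type*} [CommRing R] (n k : ℕ) :
    (k : R) * n.descFactorial (k - 1) * ((n : R) - k + 1) = k * n.descFactorial k := by
  cases k with
  | zero => simp
  | succ j => rw [Nat.add_sub_cancel, Nat.cast_descFactorial_succ]; push_cast; ring

section

variable {K : Type*} [Field K] {M : Type*} [AddCommGroup M]

theorem homDer_single (ρ : M →+ ℤ) (e m : M) (k : K) :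
    homDer K ρ e (single m k) = (ρ m : K) • single (m + e) k := by
  simp [homDer, mul_comm]

theorem homDer_comp_sub_comp (ρ ρ' : M →+ ℤ) (e e' : M) :
    homDer K ρ e ∘ₗ homDer K ρ' e' - homDer K ρ' e' ∘ₗ homDer K ρ e
      = (ρ e' : K) • homDer K ρ' (e' + e) - (ρ' e : K) • homDer K ρ (e' + e) := by
  refine lhom_ext' fun m => LinearMap.ext fun k => ?_
  simp only [LinearMap.sub_apply, LinearMap.smul_apply, LinearMap.comp_apply,
    lsingle_apply, homDer_single, map_smul, smul_smul, map_add]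
  rw [show m + e' + e = m + (e' + e) by abel, show m + e + e' = m + (e' + e) by abel]
  push_cast
  module

theorem homDer_ad_iterate (ρ₁ ρ₂ : M →+ ℤ) (e₁ e₂ : M) (h₁ : ρ₁ e₁ = -1)
    (d : ℕ) (hd : ρ₁ e₂ = d) (k : ℕ) :
    (fun W => homDer K ρ₁ e₁ ∘ₗ W - W ∘ₗ homDer K ρ₁ e₁)^[k] (homDer K ρ₂ e₂)
      = (d.descFactorial k : K) • homDer K ρ₂ (e₂ + k • e₁)
        - ((ρ₂ e₁ : K) * k * d.descFactorial (k - 1)) • homDer K ρ₁ (e₂ + k • e₁) := by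
  induction k with
  | zero => simp
  | succ k ih =>
    have hρ : (ρ₁ (e₂ + k • e₁) : K) = d - k := by simp [hd, h₁]; ring
    have hnext : e₂ + k • e₁ + e₁ = e₂ + (k + 1) • e₁ := by rw [succ_nsmul, add_assoc]
    have hV := homDer_comp_sub_comp (K := K) ρ₁ ρ₂ e₁ (e₂ + k • e₁)
    have hD := homDer_comp_sub_comp (K := K) ρ₁ ρ₁ e₁ (e₂ + k • e₁)
    rw [hnext, hρ] at hV hD
    rw [h₁] at hD
    rw [Function.iterate_succ_apply', ih]
    simp only [LinearMap.comp_sub, LinearMap.sub_comp, LinearMap.comp_smul, LinearMap.smul_comp]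
    rw [Nat.add_sub_cancel, Nat.cast_descFactorial_succ]
    linear_combination (norm := module) (d.descFactorial k : K) • hV
      - ((ρ₂ e₁ : K) * k * d.descFactorial (k - 1)) • hD
      - ((ρ₂ e₁ : K) * Nat.cast_mul_descFactorial_pred (R := K) d k) •
        homDer K ρ₁ (e₂ + (k + 1) • e₁)

end

theorem stmt7_general {K : Type*} [Field K] {M : Type*} [AddCommGroup M]
    (ρ₁ ρ₂ : M →+ ℤ) (e₁ e₂ : M)
    (h₁ : ρ₁ e₁ = -1)
    (d : ℕ) (hd : ρ₁ e₂ = (d : ℤ)) :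
    ((fun W => homDer K ρ₁ e₁ ∘ₗ W - W ∘ₗ homDer K ρ₁ e₁)^[d + 1] (homDer K ρ₂ e₂)
        = ((-(ρ₂ e₁) * ((d + 1).factorial : ℤ) : ℤ) : K) •
            homDer K ρ₁ (e₂ + (d + 1) • e₁))
    ∧ ∀ m : ℕ, d + 2 ≤ m →
        (fun W => homDer K ρ₁ e₁ ∘ₗ W - W ∘ₗ homDer K ρ₁ e₁)^[m] (homDer K ρ₂ e₂) = 0 := by
  refine ⟨?_, fun m hm => ?_⟩
  · rw [homDer_ad_iterate ρ₁ ρ₂ e₁ e₂ h₁ d hd, Nat.descFactorial_of_lt d.lt_succ_self,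
      Nat.add_sub_cancel, Nat.descFactorial_self, Nat.factorial_succ]
    push_cast
    module
  · rw [homDer_ad_iterate ρ₁ ρ₂ e₁ e₂ h₁ d hd, Nat.descFactorial_of_lt (by omega : d < m),
      Nat.descFactorial_of_lt (by omega : d < m - 1)]
    simp

/-- for `U = ∂_{ρ₁,e₁}`, `V = ∂_{ρ₂,e₂}` with `⟨ρ₁,e₁⟩ = ⟨ρ₂,e₂⟩ = −1`,
`c₂ = ⟨ρ₂,e₁⟩ ≥ 1`, `d₁ = ⟨ρ₁,e₂⟩ = d ≥ 0` and `δ = d₁ + 1`: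
`ad_U^δ(V) = −c₂ · δ! · ∂_{ρ₁, e₂ + δ e₁}` and `ad_U^m(V) = 0` for all `m ≥ δ + 1`. -/
theorem stmt7 {K : Type*} [Field K] [CharZero K] {M : Type*} [AddCommGroup M]
    (ρ₁ ρ₂ : M →+ ℤ) (e₁ e₂ : M)
    (h₁ : ρ₁ e₁ = -1) (h₂ : ρ₂ e₂ = -1)
    (hc : 1 ≤ ρ₂ e₁)
    (d : ℕ) (hd : ρ₁ e₂ = (d : ℤ)) :
    ((fun W => homDer K ρ₁ e₁ ∘ₗ W - W ∘ₗ homDer K ρ₁ e₁)^[d + 1] (homDer K ρ₂ e₂)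
        = ((-(ρ₂ e₁) * ((d + 1).factorial : ℤ) : ℤ) : K) •
            homDer K ρ₁ (e₂ + (d + 1) • e₁))
    ∧ ∀ m : ℕ, d + 2 ≤ m →
        (fun W => homDer K ρ₁ e₁ ∘ₗ W - W ∘ₗ homDer K ρ₁ e₁)^[m] (homDer K ρ₂ e₂) = 0 :=
  stmt7_general ρ₁ ρ₂ e₁ e₂ h₁ d hd
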